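/- arXiv:1803.01596 — 2 statements merged into one kernel-verified Lean document; each statement's English description precedes it below -/
import Mathlib

section
/- (Special case of the theorem of the ramée: projection onto a line through one of the six points.) Let Δ be a line of ℝ² carrying six pairwise distinct points B, H, C, G, D, F satisfying Desargues' involution identity based on the couple (D,F), namely DG·DC·FB·FH = FG·FC·DB·DH. Let K be a point not on Δ, and let ℓ be a line through D, distinct from Δ and not passing through K, such that the lines KB, KH, KC, KG, KF meet ℓ in points b', h', c', g', f respectively, these five points being pairwise distinct and distinct from D. Then Db'·Dh'·fc'·fg' = fb'·fh'·Dc'·Dg'; that is, the points D, f; b', h'; c', g' satisfy the involution identity based on the couple (D,f). -/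
noncomputable section

open EuclideanGeometry

abbrev Pt : Type := EuclideanSpace ℝ (Fin 2)

/-- The affine line through two points of the Euclidean plane. -/
def lineThrough (x y : Pt) : AffineSubspace ℝ Pt := affineSpan ℝ {x, y}

/-- A subset of the plane is a line if it is the affine span of two distinct points. -/
def IsLine (s : AffineSubspace ℝ Pt) : Prop := ∃ x y : Pt, x ≠ y ∧ s = lineThrough x y

/-!
Central projection `p` from `K` onto `ℓ` rescales distances on `Δ` by a product of weights:
with `[u, v]` the 2×2 determinant and `w` a direction of `ℓ`,
`dist (p X) (p Y) · |[w, X - K]| · |[w, Y - K]| = κ · dist X Y` for a constant `κ`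
(the numerator is twice the area of the triangle `K X Y`). In the involution identity every point
occurs equally often on both sides, so the weights and `κ` cancel, and `p D = D` since `D ∈ ℓ`.
-/

def DesarguesInvolution {P : Type*} [Dist P] (B H C G D F : P) : Prop :=
  dist D G * dist D C * dist F B * dist F H = dist F G * dist F C * dist D B * dist D H

theorem DesarguesInvolution.map {P Q : Type*} [Dist P] [Dist Q] {s : Set P} {p : P → Q}
    {a : P → ℝ} {κ : ℝ} (ha : ∀ X ∈ s, a X ≠ 0)
    (hp : ∀ X ∈ s, ∀ Y ∈ s, dist (p X) (p Y) * (a X * a Y) = κ * dist X Y)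
    {B H C G D F : P} (hB : B ∈ s) (hH : H ∈ s) (hC : C ∈ s) (hG : G ∈ s) (hD : D ∈ s)
    (hF : F ∈ s) (h : DesarguesInvolution B H C G D F) :
    DesarguesInvolution (p B) (p H) (p C) (p G) (p D) (p F) := by
  unfold DesarguesInvolution at *
  have hweights : a D ^ 2 * a F ^ 2 * a B * a H * a C * a G ≠ 0 := by
    simp only [ne_eq, mul_eq_zero, pow_eq_zero_iff two_ne_zero, not_or]
    exact ⟨⟨⟨⟨⟨ha D hD, ha F hF⟩, ha B hB⟩, ha H hH⟩, ha C hC⟩, ha G hG⟩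
  refine mul_right_cancel₀ hweights ?_
  calc _ = (dist (p D) (p G) * (a D * a G)) * (dist (p D) (p C) * (a D * a C))
          * (dist (p F) (p B) * (a F * a B)) * (dist (p F) (p H) * (a F * a H)) := by ring
    _ = κ ^ 4 * (dist D G * dist D C * dist F B * dist F H) := by
      rw [hp D hD G hG, hp D hD C hC, hp F hF B hB, hp F hF H hH]; ring
    _ = κ ^ 4 * (dist F G * dist F C * dist D B * dist D H) := by rw [h]
    _ = (dist (p F) (p G) * (a F * a G)) * (dist (p F) (p C) * (a F * a C))
          * (dist (p D) (p B) * (a D * a B)) * (dist (p D) (p H) * (a D * a H)) := by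
      rw [hp F hF G hG, hp F hF C hC, hp D hD B hB, hp D hD H hH]; ring
    _ = _ := by ring

theorem mem_lineThrough_iff {x y p : Pt} :
    p ∈ lineThrough x y ↔ ∃ r : ℝ, p = x + r • (y - x) := by
  rw [lineThrough, ← vsub_vadd p x, vadd_left_mem_affineSpan_pair]
  simp only [vsub_eq_sub, vadd_eq_add, sub_add_cancel]
  exact exists_congr fun r ↦ by rw [eq_sub_iff_add_eq', eq_comm]

def cross (x y : Pt) : ℝ := x 0 * y 1 - x 1 * y 0

theorem exists_eq_smul_of_cross_eq_zero {w q : Pt} (hw : w ≠ 0) (h : cross w q = 0) :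
    ∃ r : ℝ, q = r • w := by
  unfold cross at h
  by_cases h0 : w 0 = 0
  · have h1 : w 1 ≠ 0 := fun h1 ↦ hw (by ext i; fin_cases i <;> simp [h0, h1])
    have hq0 : q 0 = 0 := by simpa [h0, h1] using h
    refine ⟨q 1 / w 1, ?_⟩
    ext i; fin_cases i <;> simp [h0, hq0, h1]
  · refine ⟨q 0 / w 0, ?_⟩
    ext i; fin_cases i <;> simp <;> field_simp; linarith

theorem cross_sub_eq_zero_of_mem_lineThrough {x y p : Pt} (hp : p ∈ lineThrough x y) :
    cross (y - x) (p - x) = 0 := by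
  obtain ⟨r, rfl⟩ := mem_lineThrough_iff.mp hp
  simp only [cross, add_sub_cancel_left, PiLp.smul_apply, smul_eq_mul]; ring

theorem mem_lineThrough_iff_cross_eq_zero {x y p : Pt} (hxy : x ≠ y) :
    p ∈ lineThrough x y ↔ cross (y - x) (p - x) = 0 := by
  refine ⟨cross_sub_eq_zero_of_mem_lineThrough, fun h ↦ mem_lineThrough_iff.mpr ?_⟩
  obtain ⟨r, hr⟩ := exists_eq_smul_of_cross_eq_zero (sub_ne_zero.mpr hxy.symm) h
  exact ⟨r, by rw [← hr, add_sub_cancel]⟩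

theorem abs_cross_sub_sub_eq_mul_dist {B H X Y : Pt} (K : Pt) (hX : X ∈ lineThrough B H)
    (hY : Y ∈ lineThrough B H) :
    |cross (X - K) (Y - K)| = |cross (H - B) (B - K)| / ‖H - B‖ * dist X Y := by
  -- for `B = H` both sides vanish, the right one through `x / 0 = 0`
  obtain ⟨r, rfl⟩ := mem_lineThrough_iff.mp hX
  obtain ⟨t, rfl⟩ := mem_lineThrough_iff.mp hY
  have hcross : cross (B + r • (H - B) - K) (B + t • (H - B) - K)
      = (r - t) * cross (H - B) (B - K) := by
    simp only [cross, PiLp.add_apply, PiLp.sub_apply, PiLp.smul_apply, smul_eq_mul]; ring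
  have hdist : dist (B + r • (H - B)) (B + t • (H - B)) = |r - t| * ‖H - B‖ := by
    rw [dist_eq_norm, add_sub_add_left_eq_sub, ← sub_smul, norm_smul, Real.norm_eq_abs]
  rw [hcross, hdist, abs_mul]
  rcases eq_or_ne ‖H - B‖ 0 with h | h
  · rw [norm_eq_zero, sub_eq_zero] at h
    simp [h, cross]
  · field_simp

theorem cross_smul_sub_cross_smul (w a b : Pt) :
    cross w b • a - cross w a • b = cross a b • w := by
  ext i; fin_cases i <;> simp [cross] <;> ring

/-- The point where line `K X` meets line `x y`; it is the junk value `K` when the two lines are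
parallel. -/
def centralProj (K x y X : Pt) : Pt :=
  K + (cross (y - x) (x - K) / cross (y - x) (X - K)) • (X - K)

section CentralProjection

variable {K x y X p : Pt}

theorem exists_eq_add_smul_of_mem_lineThrough (hpK : p ∈ lineThrough K X)
    (hpℓ : p ∈ lineThrough x y) :
    ∃ s : ℝ, p = K + s • (X - K) ∧ s * cross (y - x) (X - K) = cross (y - x) (x - K) := by
  obtain ⟨s, rfl⟩ := mem_lineThrough_iff.mp hpK
  refine ⟨s, rfl, ?_⟩
  have h := cross_sub_eq_zero_of_mem_lineThrough hpℓ
  simp only [cross, PiLp.add_apply, PiLp.sub_apply, PiLp.smul_apply, smul_eq_mul] at h ⊢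
  linarith

theorem cross_sub_ne_zero_of_mem_lineThrough (hxy : x ≠ y) (hK : K ∉ lineThrough x y)
    (hpK : p ∈ lineThrough K X) (hpℓ : p ∈ lineThrough x y) :
    cross (y - x) (X - K) ≠ 0 := by
  obtain ⟨s, -, hs⟩ := exists_eq_add_smul_of_mem_lineThrough hpK hpℓ
  intro h0
  refine hK ((mem_lineThrough_iff_cross_eq_zero hxy).mpr ?_)
  rw [h0, mul_zero] at hs
  simp only [cross, PiLp.sub_apply] at hs ⊢
  linarith

theorem eq_centralProj_of_mem_lineThrough (hxy : x ≠ y) (hK : K ∉ lineThrough x y)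
    (hpK : p ∈ lineThrough K X) (hpℓ : p ∈ lineThrough x y) :
    p = centralProj K x y X := by
  obtain ⟨s, rfl, hs⟩ := exists_eq_add_smul_of_mem_lineThrough hpK hpℓ
  rw [centralProj, ← hs, mul_div_cancel_right₀ _
    (cross_sub_ne_zero_of_mem_lineThrough hxy hK (p := K + s • (X - K)) hpK hpℓ)]

theorem centralProj_sub_centralProj {Y : Pt} (hX : cross (y - x) (X - K) ≠ 0)
    (hY : cross (y - x) (Y - K) ≠ 0) :
    centralProj K x y X - centralProj K x y Y =
      (cross (y - x) (x - K) * cross (X - K) (Y - K)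
        / (cross (y - x) (X - K) * cross (y - x) (Y - K))) • (y - x) := by
  set w := y - x
  set c := cross w (x - K)
  calc centralProj K x y X - centralProj K x y Y
      = (c / (cross w (X - K) * cross w (Y - K)))
          • (cross w (Y - K) • (X - K) - cross w (X - K) • (Y - K)) := by
        have hXc : c / (cross w (X - K) * cross w (Y - K)) * cross w (Y - K)
            = c / cross w (X - K) := by field_simp
        have hYc : c / (cross w (X - K) * cross w (Y - K)) * cross w (X - K)
            = c / cross w (Y - K) := by field_simp
        rw [smul_sub, smul_smul, smul_smul, hXc, hYc, centralProj, centralProj]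
        abel
    _ = _ := by rw [cross_smul_sub_cross_smul, smul_smul, mul_div_right_comm]

theorem dist_centralProj_mul {Y : Pt} (hX : cross (y - x) (X - K) ≠ 0)
    (hY : cross (y - x) (Y - K) ≠ 0) :
    dist (centralProj K x y X) (centralProj K x y Y)
        * (|cross (y - x) (X - K)| * |cross (y - x) (Y - K)|) =
      |cross (y - x) (x - K)| * ‖y - x‖ * |cross (X - K) (Y - K)| := by
  rw [dist_eq_norm, centralProj_sub_centralProj hX hY, norm_smul, Real.norm_eq_abs, abs_div,
    abs_mul, abs_mul]
  field_simp

theorem dist_centralProj_mul_eq_mul_dist {B H Y : Pt} (hX : X ∈ lineThrough B H)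
    (hY : Y ∈ lineThrough B H) (hXK : cross (y - x) (X - K) ≠ 0)
    (hYK : cross (y - x) (Y - K) ≠ 0) :
    dist (centralProj K x y X) (centralProj K x y Y)
        * (|cross (y - x) (X - K)| * |cross (y - x) (Y - K)|) =
      |cross (y - x) (x - K)| * ‖y - x‖ * (|cross (H - B) (B - K)| / ‖H - B‖)
        * dist X Y := by
  rw [dist_centralProj_mul hXK hYK, abs_cross_sub_sub_eq_mul_dist K hX hY]
  ring

end CentralProjection

theorem ramee_special_case_general
    (B H C G D F : Pt)
    (hdist : List.Pairwise (· ≠ ·) [B, H, C, G, D, F])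
    (hcol : Collinear ℝ ({B, H, C, G, D, F} : Set Pt))
    (hinv : dist D G * dist D C * dist F B * dist F H
          = dist F G * dist F C * dist D B * dist D H)
    (K : Pt)
    (ℓ : AffineSubspace ℝ Pt) (hℓ : IsLine ℓ)
    (hDℓ : D ∈ ℓ) (hKℓ : K ∉ ℓ)
    (b' h' c' g' f : Pt)
    (hb : b' ∈ lineThrough K B) (hbℓ : b' ∈ ℓ)
    (hh : h' ∈ lineThrough K H) (hhℓ : h' ∈ ℓ)
    (hc : c' ∈ lineThrough K C) (hcℓ : c' ∈ ℓ)
    (hg : g' ∈ lineThrough K G) (hgℓ : g' ∈ ℓ)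
    (hf : f ∈ lineThrough K F) (hfℓ : f ∈ ℓ) :
    dist D b' * dist D h' * dist f c' * dist f g'
      = dist f b' * dist f h' * dist D c' * dist D g' := by
  obtain ⟨x, y, hxy, rfl⟩ := hℓ
  have hBH : B ≠ H := List.rel_of_pairwise_cons hdist (by simp)
  let s : Set Pt := {X | X ∈ lineThrough B H ∧ cross (y - x) (X - K) ≠ 0}
  have mem_s : ∀ {X p : Pt}, X ∈ ({B, H, C, G, D, F} : Set Pt) → p ∈ lineThrough K X →
      p ∈ lineThrough x y → X ∈ s := fun hX hpK hpℓ ↦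
    ⟨hcol.mem_affineSpan_of_mem_of_ne (by simp) (by simp) hX hBH,
      cross_sub_ne_zero_of_mem_lineThrough hxy hKℓ hpK hpℓ⟩
  have hD : D ∈ lineThrough K D := right_mem_affineSpan_pair ℝ K D
  have hproj := DesarguesInvolution.map (s := s) (p := centralProj K x y)
    (fun X hX ↦ abs_ne_zero.mpr hX.2)
    (fun X hX Y hY ↦ dist_centralProj_mul_eq_mul_dist hX.1 hY.1 hX.2 hY.2)
    (mem_s (by simp) hb hbℓ) (mem_s (by simp) hh hhℓ) (mem_s (by simp) hc hcℓ)
    (mem_s (by simp) hg hgℓ) (mem_s (by simp) hD hDℓ) (mem_s (by simp) hf hfℓ) hinv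
  rw [DesarguesInvolution, ← eq_centralProj_of_mem_lineThrough hxy hKℓ hb hbℓ,
    ← eq_centralProj_of_mem_lineThrough hxy hKℓ hh hhℓ,
    ← eq_centralProj_of_mem_lineThrough hxy hKℓ hc hcℓ,
    ← eq_centralProj_of_mem_lineThrough hxy hKℓ hg hgℓ,
    ← eq_centralProj_of_mem_lineThrough hxy hKℓ hD hDℓ,
    ← eq_centralProj_of_mem_lineThrough hxy hKℓ hf hfℓ] at hproj
  linear_combination -hproj

/-- Special case of the ramée: projection onto a line through one of the six points. -/
theorem ramee_special_case
    (B H C G D F : Pt)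
    (hdist : List.Pairwise (· ≠ ·) [B, H, C, G, D, F])
    (hcol : Collinear ℝ ({B, H, C, G, D, F} : Set Pt))
    (hinv : dist D G * dist D C * dist F B * dist F H
          = dist F G * dist F C * dist D B * dist D H)
    (K : Pt) (hK : K ∉ lineThrough B H)
    (ℓ : AffineSubspace ℝ Pt) (hℓ : IsLine ℓ)
    (hDℓ : D ∈ ℓ) (hℓΔ : ℓ ≠ lineThrough B H) (hKℓ : K ∉ ℓ)
    (b' h' c' g' f : Pt)
    (hb : b' ∈ lineThrough K B) (hbℓ : b' ∈ ℓ)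
    (hh : h' ∈ lineThrough K H) (hhℓ : h' ∈ ℓ)
    (hc : c' ∈ lineThrough K C) (hcℓ : c' ∈ ℓ)
    (hg : g' ∈ lineThrough K G) (hgℓ : g' ∈ ℓ)
    (hf : f ∈ lineThrough K F) (hfℓ : f ∈ ℓ)
    (hdist' : List.Pairwise (· ≠ ·) [D, b', h', c', g', f]) :
    dist D b' * dist D h' * dist f c' * dist f g'
      = dist f b' * dist f h' * dist D c' * dist D g' :=
  ramee_special_case_general B H C G D F hdist hcol hinv K ℓ hℓ hDℓ hKℓ b' h' c' g' f hb hbℓ hh hhℓ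
    hc hcℓ hg hgℓ hf hfℓ
end
end

section
/- Let B and K be distinct points of ℝ², let h be a point of line BK distinct from B and K, and let G be a point not on line BK. Let f be the midpoint of G and h, suppose the line Kf meets the line BG in a point F, and suppose the line through K parallel to line Gh meets the line BG in a point D. If the points B, G, D, F are pairwise distinct, then they form a harmonic range with pairs {B,G} and {D,F}. -/
noncomputable section

open EuclideanGeometry

lemma mem_line_iff {x y p : Pt} : p ∈ lineThrough x y ↔ ∃ t : ℝ, p - x = t • (y - x) := by
  rw [lineThrough, ← AffineSubspace.vsub_right_mem_direction_iff_mem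
      (left_mem_affineSpan_pair ℝ x y), direction_affineSpan, mem_vectorSpan_pair_rev]
  simp only [vsub_eq_sub]
  exact ⟨fun ⟨t, ht⟩ => ⟨t, ht.symm⟩, fun ⟨t, ht⟩ => ⟨t, ht.symm⟩⟩

/-- Desargues' construction of a harmonic range from a midpoint and a parallel. -/
theorem harmonic_from_midpoint_construction
    (B K : Pt) (hBK : B ≠ K)
    (h : Pt) (hh : h ∈ lineThrough B K) (hhB : h ≠ B) (hhK : h ≠ K)
    (G : Pt) (hG : G ∉ lineThrough B K)
    (f : Pt) (hf : f = midpoint ℝ G h)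
    (F : Pt) (hF1 : F ∈ lineThrough K f) (hF2 : F ∈ lineThrough B G)
    (D : Pt) (hD1 : D ∈ AffineSubspace.mk' K (lineThrough G h).direction)
    (hD2 : D ∈ lineThrough B G)
    (hdist : List.Pairwise (· ≠ ·) [B, G, D, F]) :
    ∃ r s : ℝ, B - D = r • (G - D) ∧ B - F = s • (G - F) ∧ r = -s := by
  simp only [List.pairwise_cons, List.mem_cons, List.mem_singleton, List.not_mem_nil,
    List.forall_mem_cons, List.forall_mem_ne] at hdist
  obtain ⟨-, h2, -, -⟩ := hdist
  have hDG : D ≠ G := (h2 D (Or.inl rfl)).symm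
  have hFG : F ≠ G := (h2 F (Or.inr (Or.inl rfl))).symm
  obtain ⟨t, ht⟩ := mem_line_iff.mp hh
  obtain ⟨a, ha⟩ := mem_line_iff.mp hF2
  obtain ⟨b, hb⟩ := mem_line_iff.mp hD2
  obtain ⟨l, hl⟩ := mem_line_iff.mp hF1
  have hD1' : D - K ∈ (lineThrough G h).direction := by
    simpa [vsub_eq_sub] using (AffineSubspace.mem_mk').mp hD1
  rw [lineThrough, direction_affineSpan, mem_vectorSpan_pair] at hD1'
  obtain ⟨m, hm⟩ := hD1'
  simp only [vsub_eq_sub] at hm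
  have hwne : G - B ≠ 0 := by
    refine sub_ne_zero.mpr (fun e => hG ?_)
    rw [e]; exact left_mem_affineSpan_pair ℝ B K
  have hvne : K - B ≠ 0 := sub_ne_zero.mpr (Ne.symm hBK)
  -- independence of K - B and G - B
  have indep : ∀ c1 c2 : ℝ, c1 • (K - B) + c2 • (G - B) = 0 → c1 = 0 ∧ c2 = 0 := by
    intro c1 c2 hc
    have hc2 : c2 = 0 := by
      by_contra hc2
      apply hG
      rw [mem_line_iff]
      refine ⟨-(c1 / c2), ?_⟩
      apply smul_right_injective Pt hc2
      show c2 • (G - B) = c2 • (-(c1 / c2) • (K - B))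
      rw [smul_smul]
      have hcc : c2 * -(c1 / c2) = -c1 := by field_simp
      rw [hcc]
      linear_combination (norm := module) hc
    refine ⟨?_, hc2⟩
    rw [hc2, zero_smul, add_zero, smul_eq_zero] at hc
    exact hc.resolve_right hvne
  have hf2 : f + f = G + h := by rw [hf]; exact midpoint_add_self ℝ G h
  have e1 : (l * t / 2 - l + 1) • (K - B) + (l / 2 - a) • (G - B) = 0 := by
    linear_combination (norm := module) (-1 : ℝ) • hl + (1 : ℝ) • ha
      + (-(l / 2)) • ht + (-(l / 2)) • hf2
  have e2 : (m * t - 1) • (K - B) + (b - m) • (G - B) = 0 := by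
    linear_combination (norm := module) (-1 : ℝ) • hm + (-1 : ℝ) • hb + (-m) • ht
  obtain ⟨q1, q2⟩ := indep _ _ e1
  obtain ⟨p1, p2⟩ := indep _ _ e2
  have hla : l = 2 * a := by linarith
  have hq : a * t - 2 * a + 1 = 0 := by rw [hla] at q1; linarith
  have hp : b * t = 1 := by have : b = m := by linarith
                            rw [this]; linarith
  have hb1 : b ≠ 1 := by
    intro e
    apply hDG
    have : D - G = (b - 1) • (G - B) := by linear_combination (norm := module) hb
    rw [e, sub_self, zero_smul] at this
    exact sub_eq_zero.mp this
  have ha1 : a ≠ 1 := by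
    intro e
    apply hFG
    have : F - G = (a - 1) • (G - B) := by linear_combination (norm := module) ha
    rw [e, sub_self, zero_smul] at this
    exact sub_eq_zero.mp this
  have hb1' : b - 1 ≠ 0 := sub_ne_zero.mpr hb1
  have ha1' : a - 1 ≠ 0 := sub_ne_zero.mpr ha1
  refine ⟨b / (b - 1), a / (a - 1), ?_, ?_, ?_⟩
  · have hGD : G - D = (1 - b) • (G - B) := by linear_combination (norm := module) (-1 : ℝ) • hb
    have hBD : B - D = (-b) • (G - B) := by linear_combination (norm := module) (-1 : ℝ) • hb
    rw [hBD, hGD, smul_smul]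
    congr 1
    field_simp
    ring
  · have hGF : G - F = (1 - a) • (G - B) := by linear_combination (norm := module) (-1 : ℝ) • ha
    have hBF : B - F = (-a) • (G - B) := by linear_combination (norm := module) (-1 : ℝ) • ha
    rw [hBF, hGF, smul_smul]
    congr 1
    field_simp
    ring
  · have key : 2 * (a * b) = a + b := by linear_combination a * hp - b * hq
    have hb1' : b - 1 ≠ 0 := sub_ne_zero.mpr hb1
    have ha1' : a - 1 ≠ 0 := sub_ne_zero.mpr ha1
    field_simp
    linear_combination key
end
end
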